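/- Let N = (X, T, F, w) be a Petri net and suppose there is a firing sequence M₀ →^{t₁} M₁ →^{t₂} ⋯ →^{tₙ} Mₙ (each tᵢ is enabled at M_{i−1} and firing it yields Mᵢ). Then there exist power products u₁, …, uₙ ∈ X^Δ such that pol(Mₙ) = pol(M₀) − u₁·pol(t₁) − u₂·pol(t₂) − ⋯ − uₙ·pol(tₙ) in ℚ[X]. -/

import Mathlib

/-!
If `t` is enabled at `M`, then `M = r + w(·,t)` with `r = M - w(·,t)` and the fired marking is
`r + w(t,·)`, so `pol(M) = x^r l_t` and `pol(M') = x^r r_t`, i.e. `pol(M') = pol(M) - x^r pol(t)`.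
Summing these one-step identities along the firing sequence telescopes to the claim.
-/

open MvPolynomial Finset

/-- A Petri net on a set `X` of places and a set `T` of transitions.
`pre x t` is the weight `w(x,t)` of the edge from place `x` to transition `t`,
and `post t x` is the weight `w(t,x)` (weights are `0` off the flow relation). -/
structure PetriNet (X T : Type*) where
  pre : X → T → ℕ
  post : T → X → ℕ

/-- A transition `t` is enabled at a marking `M` if every place `x` holds
at least `w(x,t)` tokens. -/
def PetriNet.enabled {X T : Type*} (N : PetriNet X T) (t : T) (M : X → ℕ) : Prop :=
  ∀ x, N.pre x t ≤ M x

/-- Firing transition `t` at marking `M` removes `w(x,t)` tokens from each place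
and adds `w(t,x)` tokens to each place. -/
def PetriNet.fire {X T : Type*} (N : PetriNet X T) (t : T) (M : X → ℕ) : X → ℕ :=
  fun x => M x - N.pre x t + N.post t x

/-- `M'` is reachable from `M` if some finite sequence of firings of enabled
transitions transforms `M` into `M'`. -/
def PetriNet.Reachable {X T : Type*} (N : PetriNet X T) : (X → ℕ) → (X → ℕ) → Prop :=
  Relation.ReflTransGen (fun M M' => ∃ t, N.enabled t M ∧ M' = N.fire t M)

/-- The polynomial `pol(M) = ∏ x^(M x)` associated to a marking. -/
noncomputable def polM {X : Type*} [Fintype X] (M : X → ℕ) : MvPolynomial X ℚ :=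
  ∏ x, (MvPolynomial.X x : MvPolynomial X ℚ) ^ M x

/-- The monomial `l_t = ∏ x^(w(x,t))` of the inputs of a transition. -/
noncomputable def polIn {X T : Type*} [Fintype X] (N : PetriNet X T) (t : T) :
    MvPolynomial X ℚ :=
  ∏ x, (MvPolynomial.X x : MvPolynomial X ℚ) ^ N.pre x t

/-- The monomial `r_t = ∏ x^(w(t,x))` of the outputs of a transition. -/
noncomputable def polOut {X T : Type*} [Fintype X] (N : PetriNet X T) (t : T) :
    MvPolynomial X ℚ :=
  ∏ x, (MvPolynomial.X x : MvPolynomial X ℚ) ^ N.post t x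

/-- The polynomial `pol(t) = l_t - r_t` associated to a transition. -/
noncomputable def polT {X T : Type*} [Fintype X] (N : PetriNet X T) (t : T) :
    MvPolynomial X ℚ :=
  polIn N t - polOut N t

theorem Fin.eq_sub_sum_of_succ_eq_sub {M : Type*} [AddCommGroup M] {n : ℕ}
    {a : Fin (n + 1) → M} {d : Fin n → M} (h : ∀ i, a i.succ = a i.castSucc - d i) :
    a (Fin.last n) = a 0 - ∑ i, d i := by
  induction n with
  | zero => simp
  | succ n ih =>
    have hinit := ih (a := fun i => a i.castSucc) fun i => by simpa using h i.castSucc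
    rw [← Fin.succ_last, h, Fin.sum_univ_castSucc, hinit, Fin.castSucc_zero, sub_add_eq_sub_sub]

theorem polM_add {X : Type*} [Fintype X] (f g : X → ℕ) : polM (f + g) = polM f * polM g := by
  simp only [polM, Pi.add_apply, pow_add, prod_mul_distrib]

theorem polM_eq_monomial {X : Type*} [Fintype X] (f : X → ℕ) :
    polM f = monomial (Finsupp.equivFunOnFinite.symm f) 1 := by
  rw [monomial_eq, C_1, one_mul, Finsupp.prod_fintype _ _ fun _ => pow_zero _]
  rfl

namespace PetriNet

variable {X T : Type*} (N : PetriNet X T) (t : T) (M : X → ℕ)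

def residue : X → ℕ := fun x => M x - N.pre x t

theorem residue_add_pre (h : N.enabled t M) : N.residue t M + (N.pre · t) = M :=
  funext fun x => Nat.sub_add_cancel (h x)

theorem fire_eq_residue_add_post : N.fire t M = N.residue t M + N.post t := rfl

variable [Fintype X]

theorem polIn_eq_polM : polIn N t = polM (N.pre · t) := rfl

theorem polOut_eq_polM : polOut N t = polM (N.post t) := rfl

theorem polM_fire (h : N.enabled t M) :
    polM (N.fire t M) = polM M - polM (N.residue t M) * polT N t := by
  have hM : polM M = polM (N.residue t M) * polM (N.pre · t) := by
    rw [← polM_add, N.residue_add_pre t M h]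
  rw [fire_eq_residue_add_post, polM_add, hM, polT, polIn_eq_polM, polOut_eq_polM]
  ring

end PetriNet

/-- given a firing sequence `M₀ →^{t₁} M₁ →^{t₂} ⋯ →^{tₙ} Mₙ`,
there exist power products `u₁, …, uₙ` such that
`pol(Mₙ) = pol(M₀) - u₁·pol(t₁) - ⋯ - uₙ·pol(tₙ)` in `ℚ[X]`. -/
theorem firing_sequence_polynomial {X T : Type*} [Fintype X] (N : PetriNet X T)
    (n : ℕ) (M : Fin (n + 1) → X → ℕ) (t : Fin n → T)
    (hstep : ∀ i : Fin n,
      N.enabled (t i) (M i.castSucc) ∧ M i.succ = N.fire (t i) (M i.castSucc)) :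
    ∃ u : Fin n → (X →₀ ℕ),
      polM (M (Fin.last n)) =
        polM (M 0) - ∑ i : Fin n, (monomial (u i) (1 : ℚ)) * polT N (t i) := by
  refine ⟨fun i => Finsupp.equivFunOnFinite.symm (N.residue (t i) (M i.castSucc)),
    Fin.eq_sub_sum_of_succ_eq_sub (a := fun i => polM (M i)) fun i => ?_⟩
  rw [(hstep i).2, N.polM_fire _ _ (hstep i).1, polM_eq_monomial (N.residue _ _)]
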